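/- If the period length D(√d) of the continued fraction expansion of √d is even, then D(n·√d) is even for every positive integer n. -/

import Mathlib

/-!
The period of `√N` is odd exactly when `x ^ 2 - N * y ^ 2 = -1` is solvable. Write the complete
quotients of `√N` as `α_k = (P_k + √N) / Q_k` and let `p_k / q_k` be the convergents; then
`p_k ^ 2 - N * q_k ^ 2 = (-1) ^ (k + 1) * Q_(k+1)`. For `k ≥ 1` the conjugate of `α_k` lies in
`(-1, 0)`, so `α_(k+1)` determines `α_k` and the expansion is purely periodic from `α_1` on; hence
`Q_m = 1` (with `m ≥ 1`) exactly when `α_(m+1) = α_1`, and then the period divides `m`. An odd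
period `L` thus gives the solution `(p_(L-1), q_(L-1))`, and conversely, by Legendre's theorem, a
solution `(x, y)` is a convergent `p_k / q_k` with `Q_(k+1) = 1` and `k + 1` odd. Finally
`n * √d = √(n ^ 2 * d)`, and a solution `(x, y)` for `n ^ 2 * d` yields the solution `(x, n * y)`
for `d`.
-/

/-- Iteration of the Gauss-type map producing the complete quotients of the
continued fraction expansion of `α`. -/
noncomputable def cfIter (α : ℝ) : ℕ → ℝ
  | 0 => α
  | n + 1 => (Int.fract (cfIter α n))⁻¹

/-- The `n`-th partial quotient of the continued fraction of `α`. -/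
noncomputable def cfTerm (α : ℝ) (n : ℕ) : ℤ := ⌊cfIter α n⌋

/-- `t` is an eventual period of the sequence `f`. -/
def EvPeriod (t : ℕ) (f : ℕ → ℤ) : Prop := ∃ N, ∀ n, N ≤ n → f (n + t) = f n

/-- `periodLen α` is the length of the periodic part of the continued fraction
expansion of `α`: the least positive eventual period of its partial quotients. -/
noncomputable def periodLen (α : ℝ) : ℕ := sInf {t | 0 < t ∧ EvPeriod t (cfTerm α)}

lemma cfIter_add (α : ℝ) (k m : ℕ) : cfIter α (k + m) = cfIter (cfIter α k) m := by
  induction m with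
  | zero => rfl
  | succ m ih => rw [← Nat.add_assoc, cfIter, ih]; rfl

lemma cfTerm_add (α : ℝ) (k m : ℕ) : cfTerm α (k + m) = cfTerm (cfIter α k) m := by
  rw [cfTerm, cfTerm, cfIter_add]

lemma cfTerm_succ (α : ℝ) : (fun i => cfTerm α (i + 1)) = cfTerm (Int.fract α)⁻¹ :=
  funext fun i => by rw [add_comm, cfTerm_add]; rfl

lemma cfIter_eq_cfTerm_add_inv (α : ℝ) (k : ℕ) :
    cfIter α k = cfTerm α k + (cfIter α (k + 1))⁻¹ := by
  rw [cfIter, inv_inv, cfTerm, Int.floor_add_fract]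

lemma irrational_cfIter {α : ℝ} (h : Irrational α) (k : ℕ) : Irrational (cfIter α k) := by
  induction k with
  | zero => exact h
  | succ k ih => exact (ih.sub_intCast _).inv

lemma one_lt_cfIter_succ {α : ℝ} (h : Irrational α) (k : ℕ) :
    1 < cfIter α (k + 1) :=
  one_lt_inv_iff₀.mpr ⟨Int.fract_pos.mpr ((irrational_cfIter h k).ne_int _), Int.fract_lt_one _⟩

lemma one_le_cfTerm_succ {α : ℝ} (h : Irrational α) (k : ℕ) :
    1 ≤ cfTerm α (k + 1) :=
  Int.le_floor.mpr (by exact_mod_cast (one_lt_cfIter_succ h k).le)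

lemma convergent_eq_of_cfTerm_eq {x y : ℝ} (h : cfTerm x = cfTerm y) (n : ℕ) :
    x.convergent n = y.convergent n := by
  induction n generalizing x y with
  | zero => exact congrArg (fun z : ℤ => (z : ℚ)) (congrFun h 0)
  | succ n ih =>
    have h0 : ⌊x⌋ = ⌊y⌋ := congrFun h 0
    have h1 : cfTerm (Int.fract x)⁻¹ = cfTerm (Int.fract y)⁻¹ := by
      rw [← cfTerm_succ x, ← cfTerm_succ y, h]
    rw [Real.convergent_succ, Real.convergent_succ, h0, ih h1]

lemma eq_of_cfTerm_eq {x y : ℝ} (h : cfTerm x = cfTerm y) : x = y := by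
  have hconv : (GenContFract.of x).convs = (GenContFract.of y).convs := funext fun n => by
    rw [Real.convs_eq_convergent, Real.convs_eq_convergent, convergent_eq_of_cfTerm_eq h]
  exact tendsto_nhds_unique (hconv ▸ GenContFract.of_convergence x) (GenContFract.of_convergence y)

namespace EvPeriod

variable {f : ℕ → ℤ} {s t : ℕ}

lemma add (hs : EvPeriod s f) (ht : EvPeriod t f) : EvPeriod (s + t) f := by
  obtain ⟨M, hM⟩ := hs
  obtain ⟨K, hK⟩ := ht
  exact ⟨max M K, fun n hn => by rw [← add_assoc, hK _ (by omega), hM _ (by omega)]⟩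

lemma mul (ht : EvPeriod t f) (c : ℕ) : EvPeriod (t * c) f := by
  induction c with
  | zero => exact ⟨0, fun _ _ => rfl⟩
  | succ c ih => simpa only [mul_add, mul_one] using ih.add ht

lemma sub (hs : EvPeriod s f) (ht : EvPeriod t f) : EvPeriod (t - s) f := by
  obtain ⟨M, hM⟩ := hs
  obtain ⟨K, hK⟩ := ht
  refine ⟨max M K, fun n hn => ?_⟩
  rcases le_total s t with hst | hts
  · calc f (n + (t - s)) = f (n + (t - s) + s) := (hM _ (by omega)).symm
      _ = f (n + t) := by rw [add_assoc, Nat.sub_add_cancel hst]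
      _ = f n := hK n (by omega)
  · rw [Nat.sub_eq_zero_of_le hts, add_zero]

lemma mod (hs : EvPeriod s f) (ht : EvPeriod t f) : EvPeriod (t % s) f :=
  Nat.mod_eq_sub_mul_div ▸ (hs.mul _).sub ht

end EvPeriod

lemma periodLen_spec {α : ℝ} {t : ℕ} (ht : 0 < t) (h : EvPeriod t (cfTerm α)) :
    0 < periodLen α ∧ EvPeriod (periodLen α) (cfTerm α) :=
  Nat.sInf_mem (s := {t | 0 < t ∧ EvPeriod t (cfTerm α)}) ⟨t, ht, h⟩

lemma periodLen_dvd {α : ℝ} {t : ℕ} (ht : 0 < t) (h : EvPeriod t (cfTerm α)) :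
    periodLen α ∣ t := by
  obtain ⟨hL, hLper⟩ := periodLen_spec ht h
  refine Nat.dvd_of_mod_eq_zero (Nat.eq_zero_of_not_pos fun hr => ?_)
  exact (Nat.mod_lt t hL).not_ge (Nat.sInf_le ⟨hr, hLper.mod h⟩)

lemma evPeriod_of_cfIter_add_eq {α : ℝ} {i t : ℕ} (h : cfIter α (i + t) = cfIter α i) :
    EvPeriod t (cfTerm α) := by
  refine ⟨i, fun n hn => ?_⟩
  obtain ⟨m, rfl⟩ := Nat.exists_eq_add_of_le hn
  rw [show i + m + t = i + t + m by omega, cfTerm_add, h, ← cfTerm_add]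

lemma EvPeriod.cfIter_add_eq {α : ℝ} {t : ℕ} (h : EvPeriod t (cfTerm α)) :
    ∃ M, ∀ n, M ≤ n → cfIter α (n + t) = cfIter α n := by
  obtain ⟨M, hM⟩ := h
  refine ⟨M, fun n hn => eq_of_cfTerm_eq (funext fun m => ?_)⟩
  rw [← cfTerm_add, ← cfTerm_add, show n + t + m = n + m + t by omega]
  exact hM _ (by omega)

-- `cfMat a (n + 1) = !![p_n, p_(n-1); q_n, q_(n-1)]`, where `p_n / q_n = [a 0; a 1, …, a n]`.
def cfMat (a : ℕ → ℤ) : ℕ → Matrix (Fin 2) (Fin 2) ℤ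
  | 0 => 1
  | n + 1 => cfMat a n * !![a n, 1; 1, 0]

lemma det_cfMat (a : ℕ → ℤ) (n : ℕ) : (cfMat a n).det = (-1) ^ n := by
  induction n with
  | zero => simp [cfMat]
  | succ n ih => rw [cfMat, Matrix.det_mul, ih, Matrix.det_fin_two_of, pow_succ]; ring

lemma isCoprime_cfMat (a : ℕ → ℤ) (n : ℕ) : IsCoprime (cfMat a n 0 0) (cfMat a n 1 0) := by
  have h := det_cfMat a n
  rw [Matrix.det_fin_two] at h
  refine ⟨(-1) ^ n * cfMat a n 1 1, -(-1) ^ n * cfMat a n 0 1, ?_⟩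
  have hsq : ((-1 : ℤ) ^ n) ^ 2 = 1 := by rw [← pow_mul, mul_comm, pow_mul, neg_one_sq, one_pow]
  linear_combination (-1) ^ n * h + hsq

lemma cfMat_succ_apply_zero (a : ℕ → ℤ) (n : ℕ) (i : Fin 2) :
    cfMat a (n + 1) i 0 = cfMat a n i 0 * a n + cfMat a n i 1 := by
  simp [cfMat, Matrix.mul_apply, Fin.sum_univ_two]

lemma cfMat_succ_apply_one (a : ℕ → ℤ) (n : ℕ) (i : Fin 2) :
    cfMat a (n + 1) i 1 = cfMat a n i 0 := by
  simp [cfMat, Matrix.mul_apply, Fin.sum_univ_two]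

lemma cfMat_succ' (a : ℕ → ℤ) (n : ℕ) :
    cfMat a (n + 1) = !![a 0, 1; 1, 0] * cfMat (fun i => a (i + 1)) n := by
  induction n with
  | zero => simp [cfMat]
  | succ n ih => rw [cfMat, ih, cfMat, mul_assoc]

lemma one_le_cfMat {a : ℕ → ℤ} (ha : ∀ i, 1 ≤ a i) (n : ℕ) (i : Fin 2) :
    1 ≤ cfMat a (n + 1) i 0 ∧ 0 ≤ cfMat a (n + 1) i 1 := by
  induction n with
  | zero => fin_cases i <;> simp [cfMat, ha 0]
  | succ n ih =>
    obtain ⟨h0, h1⟩ := ih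
    rw [cfMat_succ_apply_zero a (n + 1), cfMat_succ_apply_one a (n + 1)]
    constructor <;> nlinarith [ha (n + 1)]

lemma convergent_eq_cfMat {ξ : ℝ} (h : Irrational ξ) (n : ℕ) :
    ξ.convergent n = (cfMat (cfTerm ξ) (n + 1) 0 0 : ℚ) / (cfMat (cfTerm ξ) (n + 1) 1 0 : ℚ) := by
  induction n generalizing ξ with
  | zero => simp [cfMat, cfTerm, cfIter]
  | succ n ih =>
    have h1 : Irrational (Int.fract ξ)⁻¹ := irrational_cfIter h 1
    have hpos := (one_le_cfMat (one_le_cfTerm_succ h) n 0).1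
    rw [cfTerm_succ] at hpos
    rw [Real.convergent_succ, ih h1, cfMat_succ' (cfTerm ξ) (n + 1), cfTerm_succ]
    set B := cfMat (cfTerm (Int.fract ξ)⁻¹) (n + 1)
    have hne : (B 0 0 : ℚ) ≠ 0 := by positivity
    simp [Matrix.mul_apply, Fin.sum_univ_two, cfTerm, cfIter, add_div, hne]

lemma mul_cfMat {ξ : ℝ} (h : Irrational ξ) (n : ℕ) :
    ξ * (cfMat (cfTerm ξ) n 1 0 * cfIter ξ n + cfMat (cfTerm ξ) n 1 1) =
      cfMat (cfTerm ξ) n 0 0 * cfIter ξ n + cfMat (cfTerm ξ) n 0 1 := by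
  induction n with
  | zero => simp [cfMat, cfIter]
  | succ n ih =>
    have hne : cfIter ξ (n + 1) ≠ 0 := (irrational_cfIter h (n + 1)).ne_zero
    rw [cfIter_eq_cfTerm_add_inv ξ n] at ih
    simp only [cfMat_succ_apply_zero, cfMat_succ_apply_one, Int.cast_add, Int.cast_mul]
    field_simp at ih
    linear_combination ih

lemma inv_mem_Ioo_of_lt_neg_one {x : ℝ} (h : x < -1) : x⁻¹ ∈ Set.Ioo (-1) 0 := by
  refine ⟨?_, inv_lt_zero.mpr (by linarith)⟩
  rw [neg_lt, ← inv_neg]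
  exact inv_lt_one_of_one_lt₀ (by linarith)

lemma reduced_bounds {P Q s : ℝ} (hs : 0 < s) (h1 : 1 < (P + s) / Q)
    (h2 : (P - s) / Q ∈ Set.Ioo (-1) 0) : 0 < Q ∧ 0 < P ∧ P < s ∧ s < P + Q ∧ Q < P + s := by
  have hQ : 0 < Q := by
    have h : 0 < 2 * s / Q := by
      have : 2 * s / Q = (P + s) / Q - (P - s) / Q := by ring
      linarith [h2.2]
    exact (div_pos_iff_of_pos_left (by positivity)).mp h
  rw [one_lt_div hQ] at h1
  obtain ⟨h3, h4⟩ := h2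
  rw [lt_div_iff₀ hQ] at h3
  rw [div_lt_iff₀ hQ] at h4
  refine ⟨hQ, ?_, ?_, ?_, ?_⟩ <;> linarith

lemma abs_sub_div_lt_of_sq_sub_sq {s x y : ℝ} (hs : 2 ≤ s ^ 2) (hs0 : 0 < s) (hx : 0 < x)
    (hy : 1 ≤ y) (h : x ^ 2 - s ^ 2 * y ^ 2 = -1) : |s - x / y| < 1 / (2 * y ^ 2) := by
  have hy0 : 0 < y := by linarith
  have hyx : y ≤ x := by nlinarith
  have hprod : (s * y - x) * (s * y + x) = 1 := by linear_combination -h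
  have hsy : y < s * y := by nlinarith
  have hpos : 0 < s * y - x := by nlinarith
  have hsub : s - x / y = (s * y - x) / y := by field_simp
  rw [hsub, abs_of_pos (div_pos hpos hy0), div_lt_div_iff₀ hy0 (by positivity)]
  nlinarith

section Surd

variable {N : ℕ}

lemma natCast_ne_sq (hN : Irrational √N) (P : ℤ) : (N : ℤ) ≠ P ^ 2 := by
  intro h
  refine irrational_sqrt_natCast_iff.mp hN ⟨P.natAbs, ?_⟩
  rw [← sq]
  exact_mod_cast h.trans (Int.natAbs_sq P).symm

lemma two_le_of_irrational_sqrt (hN : Irrational √N) : 2 ≤ N := by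
  by_contra! h
  interval_cases N <;> simp at hN

lemma sqrt_pos_of_irrational (hN : Irrational √N) : 0 < √N :=
  (Real.sqrt_nonneg _).lt_of_ne hN.ne_zero.symm

lemma one_le_cfTerm_sqrt (hN : Irrational √N) : ∀ k, 1 ≤ cfTerm √N k
  | 0 => Int.le_floor.mpr <| by
    simpa [cfIter] using (one_le_two.trans (two_le_of_irrational_sqrt hN))
  | k + 1 => one_le_cfTerm_succ hN k

-- `cfIter √N k = (P_k + √N) / Q_k` for `(P_k, Q_k) = PQ N k` (`cfIter_sqrt`); the division
-- defining `Q_(k+1)` is exact by `PQ_snd_dvd`.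
noncomputable def PQ (N : ℕ) : ℕ → ℤ × ℤ
  | 0 => (0, 1)
  | k + 1 =>
    let P := cfTerm √N k * (PQ N k).2 - (PQ N k).1
    (P, (N - P ^ 2) / (PQ N k).2)

lemma PQ_fst_succ (k : ℕ) : (PQ N (k + 1)).1 = cfTerm √N k * (PQ N k).2 - (PQ N k).1 := rfl

lemma dvd_sub_sq_of_dvd {n p q : ℤ} (h : q ∣ n - p ^ 2) (a : ℤ) : q ∣ n - (a * q - p) ^ 2 := by
  have : n - (a * q - p) ^ 2 = n - p ^ 2 + q * (2 * a * p - a ^ 2 * q) := by ring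
  rw [this]
  exact dvd_add h (dvd_mul_right _ _)

lemma PQ_snd_dvd : ∀ k, (PQ N k).2 ∣ N - (PQ N k).1 ^ 2
  | 0 => by simp [PQ]
  | k + 1 => Dvd.intro _ (Int.ediv_mul_cancel (dvd_sub_sq_of_dvd (PQ_snd_dvd k) (cfTerm √N k)))

lemma PQ_snd_mul_snd_succ (k : ℕ) :
    (PQ N k).2 * (PQ N (k + 1)).2 = N - (PQ N (k + 1)).1 ^ 2 :=
  Int.mul_ediv_cancel' (dvd_sub_sq_of_dvd (PQ_snd_dvd k) _)

lemma PQ_snd_ne_zero (hN : Irrational √N) : ∀ k, (PQ N k).2 ≠ 0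
  | 0 => one_ne_zero
  | k + 1 => right_ne_zero_of_mul <|
    PQ_snd_mul_snd_succ k ▸ sub_ne_zero.mpr (natCast_ne_sq hN _)

-- Stated for both square roots `s = ±√N`, so that it also governs the conjugates `cfConj`.
lemma PQ_step (hN : Irrational √N) {s : ℝ} (hs : s ^ 2 = N) (k : ℕ) :
    ((PQ N (k + 1)).1 + s) / (PQ N (k + 1)).2 =
      (((PQ N k).1 + s) / (PQ N k).2 - cfTerm √N k)⁻¹ := by
  have hQ : ((PQ N k).2 : ℝ) ≠ 0 := by exact_mod_cast PQ_snd_ne_zero hN k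
  have hQ' : ((PQ N (k + 1)).2 : ℝ) ≠ 0 := by exact_mod_cast PQ_snd_ne_zero hN (k + 1)
  have hmul : ((PQ N k).2 : ℝ) * (PQ N (k + 1)).2 = N - (PQ N (k + 1)).1 ^ 2 := by
    exact_mod_cast PQ_snd_mul_snd_succ k
  have hP : ((PQ N (k + 1)).1 : ℝ) = cfTerm √N k * (PQ N k).2 - (PQ N k).1 := by
    exact_mod_cast PQ_fst_succ k
  have hsP : s - (PQ N (k + 1)).1 ≠ 0 := by
    intro h0
    have : (N : ℝ) = (PQ N (k + 1)).1 ^ 2 := by rw [← hs, sub_eq_zero.mp h0]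
    exact natCast_ne_sq hN _ (by exact_mod_cast this)
  have hsub : ((PQ N k).1 + s) / (PQ N k).2 - cfTerm √N k =
      (s - (PQ N (k + 1)).1) / (PQ N k).2 := by
    rw [hP]; field_simp; ring
  rw [hsub, inv_div, div_eq_div_iff hQ' hsP]
  linear_combination hs - hmul

lemma cfIter_sqrt (hN : Irrational √N) : ∀ k,
    cfIter √N k = ((PQ N k).1 + √N) / (PQ N k).2
  | 0 => by simp [PQ, cfIter]
  | k + 1 => by
    rw [cfIter, Int.fract, cfIter_sqrt hN k, PQ_step hN (Real.sq_sqrt N.cast_nonneg) k, cfTerm,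
      cfIter_sqrt hN k]

-- The Galois conjugate of `cfIter √N k`.
noncomputable def cfConj (N k : ℕ) : ℝ := ((PQ N k).1 - √N) / (PQ N k).2

lemma cfConj_succ (hN : Irrational √N) (k : ℕ) :
    cfConj N (k + 1) = (cfConj N k - cfTerm √N k)⁻¹ := by
  simpa only [cfConj, ← sub_eq_add_neg] using
    PQ_step hN (s := -√N) (by rw [neg_sq, Real.sq_sqrt N.cast_nonneg]) k

lemma cfConj_mem_Ioo (hN : Irrational √N) : ∀ k, cfConj N (k + 1) ∈ Set.Ioo (-1) 0
  | 0 => by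
    rw [cfConj_succ hN]
    refine inv_mem_Ioo_of_lt_neg_one ?_
    have h1 : (1 : ℝ) ≤ cfTerm √N 0 := by exact_mod_cast one_le_cfTerm_sqrt hN 0
    have h0 : cfConj N 0 = -√N := by simp [cfConj, PQ]
    linarith [sqrt_pos_of_irrational hN]
  | k + 1 => by
    rw [cfConj_succ hN]
    refine inv_mem_Ioo_of_lt_neg_one ?_
    have h1 : (1 : ℝ) ≤ cfTerm √N (k + 1) := by exact_mod_cast one_le_cfTerm_sqrt hN (k + 1)
    linarith [(cfConj_mem_Ioo hN k).2]

lemma PQ_bounds (hN : Irrational √N) (k : ℕ) :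
    0 < ((PQ N (k + 1)).2 : ℝ) ∧ 0 < ((PQ N (k + 1)).1 : ℝ) ∧ ((PQ N (k + 1)).1 : ℝ) < √N ∧
      √N < (PQ N (k + 1)).1 + (PQ N (k + 1)).2 ∧ ((PQ N (k + 1)).2 : ℝ) < (PQ N (k + 1)).1 + √N :=
  reduced_bounds (sqrt_pos_of_irrational hN)
    (by rw [← cfIter_sqrt hN]; exact one_lt_cfIter_succ hN k) (cfConj_mem_Ioo hN k)

lemma exists_cfIter_sqrt_eq (hN : Irrational √N) :
    ∃ i j, i < j ∧ cfIter √N (i + 1) = cfIter √N (j + 1) := by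
  set b := ⌊2 * √N⌋
  have hmem : ∀ k, PQ N (k + 1) ∈ Set.Icc 1 b ×ˢ Set.Icc 1 b := fun k => by
    obtain ⟨hQ, hP, hPs, -, hQs⟩ := PQ_bounds hN k
    have hP' : 0 < (PQ N (k + 1)).1 := by exact_mod_cast hP
    have hQ' : 0 < (PQ N (k + 1)).2 := by exact_mod_cast hQ
    exact ⟨⟨hP', Int.le_floor.mpr (by linarith)⟩, ⟨hQ', Int.le_floor.mpr (by linarith)⟩⟩
  obtain ⟨i, j, hij, h⟩ := Set.Finite.exists_lt_map_eq_of_forall_mem hmem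
    ((Set.finite_Icc 1 b).prod (Set.finite_Icc 1 b))
  exact ⟨i, j, hij, by rw [cfIter_sqrt hN, cfIter_sqrt hN, h]⟩

lemma periodLen_sqrt_spec (hN : Irrational √N) :
    0 < periodLen √N ∧ EvPeriod (periodLen √N) (cfTerm √N) := by
  obtain ⟨i, j, hij, h⟩ := exists_cfIter_sqrt_eq hN
  exact periodLen_spec (Nat.sub_pos_of_lt hij)
    (evPeriod_of_cfIter_add_eq (i := i + 1) (by rw [show i + 1 + (j - i) = j + 1 by omega, h]))

lemma eq_zero_of_add_mul_sqrt (hN : Irrational √N) {a b : ℤ} (h : (a : ℝ) + b * √N = 0) :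
    a = 0 ∧ b = 0 := by
  obtain rfl | hb := eq_or_ne b 0
  · exact ⟨by simpa using h, rfl⟩
  · exact absurd h ((hN.intCast_mul hb).intCast_add a).ne_zero

lemma PQ_eq_of_cfIter_eq (hN : Irrational √N) {i j : ℕ} (h : cfIter √N i = cfIter √N j) :
    PQ N i = PQ N j := by
  have hQi : ((PQ N i).2 : ℝ) ≠ 0 := by exact_mod_cast PQ_snd_ne_zero hN i
  have hQj : ((PQ N j).2 : ℝ) ≠ 0 := by exact_mod_cast PQ_snd_ne_zero hN j
  rw [cfIter_sqrt hN, cfIter_sqrt hN, div_eq_div_iff hQi hQj] at h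
  obtain ⟨h1, h2⟩ := eq_zero_of_add_mul_sqrt hN
    (a := (PQ N i).1 * (PQ N j).2 - (PQ N j).1 * (PQ N i).2) (b := (PQ N j).2 - (PQ N i).2)
    (by push_cast; linear_combination h)
  have hQ : (PQ N i).2 = (PQ N j).2 := by linarith
  rw [hQ, ← sub_mul, mul_eq_zero, sub_eq_zero] at h1
  exact Prod.ext (h1.resolve_right (PQ_snd_ne_zero hN j)) hQ

-- Since the conjugates lie in `(-1, 0)`, the partial quotient `a_(k+1)` can be recovered from
-- `α_(k+2)`; this is what makes the expansion of `√N` purely periodic from `α_1` on.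
lemma cfTerm_sqrt_succ_eq_floor (hN : Irrational √N) (k : ℕ) :
    cfTerm √N (k + 1) = ⌊-(cfConj N (k + 2))⁻¹⌋ := by
  have h := cfConj_mem_Ioo hN k
  rw [cfConj_succ hN, inv_inv, eq_comm, Int.floor_eq_iff]
  constructor <;> linarith [h.1, h.2]

lemma cfIter_sqrt_eq_of_succ_eq (hN : Irrational √N) {i j : ℕ}
    (h : cfIter √N (i + 2) = cfIter √N (j + 2)) : cfIter √N (i + 1) = cfIter √N (j + 1) := by
  have ha : cfTerm √N (i + 1) = cfTerm √N (j + 1) := by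
    rw [cfTerm_sqrt_succ_eq_floor hN, cfTerm_sqrt_succ_eq_floor hN, cfConj, cfConj,
      PQ_eq_of_cfIter_eq hN h]
  rw [cfIter_eq_cfTerm_add_inv _ (i + 1), cfIter_eq_cfTerm_add_inv _ (j + 1), ha, h]

lemma cfIter_sqrt_eq_of_add_eq (hN : Irrational √N) {i j : ℕ} :
    ∀ k, cfIter √N (i + 1 + k) = cfIter √N (j + 1 + k) → cfIter √N (i + 1) = cfIter √N (j + 1)
  | 0, h => h
  | k + 1, h => cfIter_sqrt_eq_of_succ_eq hN <|
    cfIter_sqrt_eq_of_add_eq hN (i := i + 1) (j := j + 1) k <| by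
      rw [show i + 1 + 1 + k = i + 1 + (k + 1) by omega,
        show j + 1 + 1 + k = j + 1 + (k + 1) by omega]
      exact h

lemma cfIter_sqrt_periodLen_succ (hN : Irrational √N) :
    cfIter √N (periodLen √N + 1) = cfIter √N 1 := by
  obtain ⟨M, hM⟩ := (periodLen_sqrt_spec hN).2.cfIter_add_eq
  refine cfIter_sqrt_eq_of_add_eq hN (j := 0) M ?_
  rw [show periodLen √N + 1 + M = M + 1 + periodLen √N by omega, hM _ (by omega), zero_add,
    add_comm]

lemma cfIter_sqrt_succ_eq_one_iff (hN : Irrational √N) (k : ℕ) :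
    cfIter √N (k + 2) = cfIter √N 1 ↔ (PQ N (k + 1)).2 = 1 := by
  constructor
  · intro h
    have h1 := PQ_snd_mul_snd_succ (N := N) (k + 1)
    rw [PQ_eq_of_cfIter_eq hN h, ← PQ_snd_mul_snd_succ 0] at h1
    exact mul_right_cancel₀ (PQ_snd_ne_zero hN 1) (h1.trans rfl)
  · intro hQ
    obtain ⟨-, -, hPs, hsP, -⟩ := PQ_bounds hN k
    rw [hQ, Int.cast_one] at hsP
    have hP : (PQ N (k + 1)).1 = cfTerm √N 0 := by
      rw [cfTerm, cfIter, eq_comm, Int.floor_eq_iff]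
      constructor <;> linarith
    rw [cfIter, cfIter_sqrt hN, hQ, hP]
    simp [cfIter, cfTerm]

lemma cfMat_sqrt_sq_sub (hN : Irrational √N) (n : ℕ) :
    cfMat (cfTerm √N) (n + 1) 0 0 ^ 2 - N * cfMat (cfTerm √N) (n + 1) 1 0 ^ 2 =
      (-1) ^ (n + 1) * (PQ N (n + 1)).2 := by
  have h := mul_cfMat hN (n + 1)
  rw [cfIter_sqrt hN] at h
  set A := cfMat (cfTerm √N) (n + 1)
  set P := (PQ N (n + 1)).1
  set Q := (PQ N (n + 1)).2
  have hQ : (Q : ℝ) ≠ 0 := by exact_mod_cast PQ_snd_ne_zero hN (n + 1)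
  field_simp at h
  have hs := Real.sq_sqrt (N.cast_nonneg : (0 : ℝ) ≤ N)
  obtain ⟨h1, h2⟩ := eq_zero_of_add_mul_sqrt hN (a := A 0 0 * P + A 0 1 * Q - N * A 1 0)
    (b := A 0 0 - A 1 0 * P - A 1 1 * Q) (by push_cast; linear_combination -h + A 1 0 * hs)
  have hdet := det_cfMat (cfTerm √N) (n + 1)
  rw [Matrix.det_fin_two] at hdet
  linear_combination A 0 0 * h2 + A 1 0 * h1 + Q * hdet

lemma odd_periodLen_of_sq_sub_sq (hN : Irrational √N) {x y : ℤ} (hx : 0 < x) (hy : 0 < y)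
    (h : x ^ 2 - N * y ^ 2 = -1) : Odd (periodLen √N) := by
  have hcop : (x.natAbs).Coprime y.natAbs :=
    Int.isCoprime_iff_gcd_eq_one.mp ⟨-x, N * y, by linear_combination -h⟩
  have happrox : |√N - ((x / y : ℚ) : ℝ)| < 1 / (2 * ((x / y : ℚ).den : ℝ) ^ 2) := by
    have hden : ((x / y : ℚ).den : ℝ) = y := by
      exact_mod_cast congrArg (Int.cast : ℤ → ℝ) (Rat.den_div_eq_of_coprime hy hcop)
    have hN2 : (2 : ℝ) ≤ N := by exact_mod_cast two_le_of_irrational_sqrt hN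
    push_cast
    rw [hden]
    refine abs_sub_div_lt_of_sq_sub_sq (by rwa [Real.sq_sqrt N.cast_nonneg])
      (sqrt_pos_of_irrational hN) (by exact_mod_cast hx) (by exact_mod_cast hy) ?_
    rw [Real.sq_sqrt N.cast_nonneg]
    exact_mod_cast h
  obtain ⟨n, hn⟩ := Real.exists_rat_eq_convergent happrox
  rw [convergent_eq_cfMat hN] at hn
  obtain ⟨rfl, rfl⟩ := Rat.div_int_inj hy (one_le_cfMat (one_le_cfTerm_sqrt hN) n 1).1 hcop
    (Int.isCoprime_iff_gcd_eq_one.mp (isCoprime_cfMat _ _)) hn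
  have hQ := cfMat_sqrt_sq_sub hN n
  rw [h] at hQ
  have hQpos : 0 < (PQ N (n + 1)).2 := by exact_mod_cast (PQ_bounds hN n).1
  rcases Nat.even_or_odd (n + 1) with he | ho
  · rw [he.neg_one_pow] at hQ
    omega
  · rw [ho.neg_one_pow] at hQ
    have hper : EvPeriod (n + 1) (cfTerm √N) := evPeriod_of_cfIter_add_eq (i := 1) <| by
      rw [add_comm, (cfIter_sqrt_succ_eq_one_iff hN n).mpr (by omega)]
    exact ho.of_dvd_nat (periodLen_dvd n.succ_pos hper)

lemma exists_sq_sub_sq_of_odd_periodLen (hN : Irrational √N) (h : Odd (periodLen √N)) :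
    ∃ x y : ℤ, x ^ 2 - N * y ^ 2 = -1 := by
  obtain ⟨k, hk⟩ : ∃ k, periodLen √N = k + 1 :=
    ⟨_, (Nat.succ_pred_eq_of_pos (periodLen_sqrt_spec hN).1).symm⟩
  have hQ := cfIter_sqrt_periodLen_succ hN
  rw [hk, cfIter_sqrt_succ_eq_one_iff hN k] at hQ
  refine ⟨_, _, (cfMat_sqrt_sq_sub hN k).trans ?_⟩
  rw [hQ, ← hk, h.neg_one_pow, mul_one]

theorem odd_periodLen_sqrt_iff (hN : Irrational √N) :
    Odd (periodLen √N) ↔ ∃ x y : ℤ, x ^ 2 - N * y ^ 2 = -1 := by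
  refine ⟨exists_sq_sub_sq_of_odd_periodLen hN, fun ⟨x, y, h⟩ => ?_⟩
  have hy : y ≠ 0 := by rintro rfl; nlinarith [sq_nonneg x]
  have hx : x ≠ 0 := by
    rintro rfl
    have h1 : (N : ℤ) = 1 :=
      Int.eq_one_of_mul_eq_one_right (b := y ^ 2) (Nat.cast_nonneg N) (by linarith)
    have := two_le_of_irrational_sqrt hN
    omega
  exact odd_periodLen_of_sq_sub_sq hN (abs_pos.mpr hx) (abs_pos.mpr hy)
    (by rwa [sq_abs, sq_abs])

end Surd

theorem stmt2 (d : ℕ) (hsq : ¬ IsSquare d)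
    (h : Even (periodLen (Real.sqrt d))) :
    ∀ n : ℕ, 0 < n → Even (periodLen ((n : ℝ) * Real.sqrt d)) := by
  intro n hn
  have hd : Irrational √d := irrational_sqrt_natCast_iff.mpr hsq
  have hsqrt : (n : ℝ) * √d = √((n ^ 2 * d : ℕ) : ℝ) := by
    push_cast
    rw [Real.sqrt_mul (by positivity), Real.sqrt_sq n.cast_nonneg]
  have hnd : Irrational √((n ^ 2 * d : ℕ) : ℝ) := hsqrt ▸ hd.natCast_mul hn.ne'
  rw [hsqrt, ← Nat.not_odd_iff_even, odd_periodLen_sqrt_iff hnd]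
  rintro ⟨x, y, hxy⟩
  refine Nat.not_odd_iff_even.mpr h ((odd_periodLen_sqrt_iff hd).mpr ⟨x, n * y, ?_⟩)
  push_cast at hxy
  linear_combination hxy
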